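/- Define γ₁² : [0,1] → S³ ⊂ ℝ⁴ by γ₁²(t) = ( (1/4)cos(3πt) + (3/4)cos(πt), (√3/4)sin(3πt) + (√3/4)sin(πt), (√3/4)cos(πt) − (√3/4)cos(3πt), (3/4)sin(πt) − (1/4)sin(3πt) ). Then γ₁² is convex: for every nonzero h ∈ ℝ⁴, γ₁² intersects the hyperplane {x ∈ ℝ⁴ : h·x = 0} with total multiplicity at most 3 on (0,1). -/

import Mathlib

open Set Real

/-- The Euclidean dot product on `ℝ^k`. -/
def dotv {k : ℕ} (v w : Fin k → ℝ) : ℝ := ∑ i, v i * w i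

/-- The curve `γ` intersects the hyperplane `{x : h·x = 0}` with total multiplicity at
most `N` on the open interval `(a,b)`: for any distinct points `t₁, …, t_j ∈ (a,b)` and
positive integers `m₁, …, m_j` such that `f = h·γ` vanishes at `t_i` together with its
first `m_i − 1` derivatives, one has `m₁ + ⋯ + m_j ≤ N`. -/
def MultAtMost {k : ℕ} (γ : ℝ → Fin k → ℝ) (a b : ℝ) (h : Fin k → ℝ) (N : ℕ) : Prop :=
  ∀ (j : ℕ) (t : Fin j → ℝ) (m : Fin j → ℕ),
    (∀ i, t i ∈ Ioo a b) → Function.Injective t → (∀ i, 1 ≤ m i) →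
    (∀ i, ∀ l < m i, iteratedDeriv l (fun s => dotv h (γ s)) (t i) = 0) →
    ∑ i, m i ≤ N

/-- The curve `γ₁² : [0,1] → S³`. -/
noncomputable def gamma12 (t : ℝ) : Fin 4 → ℝ :=
  ![1 / 4 * Real.cos (3 * π * t) + 3 / 4 * Real.cos (π * t),
    Real.sqrt 3 / 4 * Real.sin (3 * π * t) + Real.sqrt 3 / 4 * Real.sin (π * t),
    Real.sqrt 3 / 4 * Real.cos (π * t) - Real.sqrt 3 / 4 * Real.cos (3 * π * t),
    3 / 4 * Real.sin (π * t) - 1 / 4 * Real.sin (3 * π * t)]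

/-!
Write `f(t) = h·γ₁²(t) = a cos πt + b sin πt + c cos 3πt + d sin 3πt`. With `z = e^{iπt}` one
finds `2 z³ f(t) = Q(z²)` for a nonzero complex polynomial `Q` of degree at most 3, whose
coefficients are `c ± id` and `a ± ib`. Since `d/dt` acts on `t ↦ P(e^{μt})` as `μ X d/dX`, a zero
of order `m` of `f` at `t₀` is a root of `Q` of multiplicity at least `m` at `e^{2πit₀}`, and
`t ↦ e^{2πit}` is injective on `(0,1)`; so the total multiplicity is at most `deg Q ≤ 3`.
-/

open Complex Polynomial Function

theorem ContinuousLinearMap.iteratedDeriv_comp_left {𝕜 F G : Type*}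
    [NontriviallyNormedField 𝕜] [NormedAddCommGroup F] [NormedSpace 𝕜 F]
    [NormedAddCommGroup G] [NormedSpace 𝕜 G]
    (L : F →L[𝕜] G) {f : 𝕜 → F} {n : ℕ} {x : 𝕜} (hf : ContDiffAt 𝕜 n f x) :
    iteratedDeriv n (L ∘ f) x = L (iteratedDeriv n f x) := by
  rw [iteratedDeriv_eq_iteratedFDeriv, iteratedDeriv_eq_iteratedFDeriv,
    L.iteratedFDeriv_comp_left hf le_rfl]
  rfl

@[fun_prop]
theorem Complex.contDiff_ofReal {n : WithTop ℕ∞} : ContDiff ℝ n ((↑) : ℝ → ℂ) :=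
  ofRealCLM.contDiff

theorem iteratedDeriv_mul_ofReal_eq_zero {f : ℝ → ℝ} {g : ℝ → ℂ} {n : ℕ} {x : ℝ}
    (hf : ContDiffAt ℝ n f x) (hg : ContDiffAt ℝ n g x)
    (hfx : ∀ k ≤ n, iteratedDeriv k f x = 0) :
    iteratedDeriv n (fun t => g t * f t) x = 0 := by
  rw [iteratedDeriv_fun_mul hg (by fun_prop)]
  refine Finset.sum_eq_zero fun k _ => ?_
  have hle : n - k ≤ n := Nat.sub_le n k
  have hfk : iteratedDeriv (n - k) (fun t => (f t : ℂ)) x = 0 := by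
    rw [show (fun t => (f t : ℂ)) = ofRealCLM ∘ f from rfl,
      ofRealCLM.iteratedDeriv_comp_left (hf.of_le (by exact_mod_cast hle)), hfx _ hle, map_zero]
  rw [hfk, mul_zero]

/-- The Euler operator `X · d/dX`, which is `μ⁻¹ · d/dt` under the substitution `X = exp (μ t)`. -/
noncomputable def Polynomial.eulerDeriv {R : Type*} [Semiring R] (p : R[X]) : R[X] :=
  X * derivative p

theorem hasDerivAt_eval_cexp (P : ℂ[X]) (μ : ℂ) (x : ℝ) :
    HasDerivAt (fun t : ℝ => P.eval (cexp (μ * t)))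
      (μ * (eulerDeriv P).eval (cexp (μ * x))) x := by
  have hexp : HasDerivAt (fun t : ℝ => cexp (μ * t)) (cexp (μ * x) * μ) x := by
    simpa using ((hasDerivAt_id x).ofReal_comp.const_mul μ).cexp
  refine ((P.hasDerivAt (cexp (μ * x))).comp x hexp).congr_deriv ?_
  rw [eulerDeriv, eval_mul, eval_X]
  ring

theorem iteratedDeriv_eval_cexp (P : ℂ[X]) (μ : ℂ) (n : ℕ) :
    iteratedDeriv n (fun t : ℝ => P.eval (cexp (μ * t))) =
      fun t : ℝ => μ ^ n * (eulerDeriv^[n] P).eval (cexp (μ * t)) := by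
  induction n generalizing P with
  | zero => simp
  | succ n ih =>
    have hderiv : deriv (fun t : ℝ => P.eval (cexp (μ * t))) =
        fun t : ℝ => μ * (eulerDeriv P).eval (cexp (μ * t)) :=
      funext fun x => (hasDerivAt_eval_cexp P μ x).deriv
    funext x
    rw [iteratedDeriv_succ', hderiv, iteratedDeriv_const_mul_field, ih, iterate_succ_apply]
    ring

theorem le_rootMultiplicity_of_eval_iterate_eulerDeriv_eq_zero {K : Type*} [Field K] [CharZero K]
    {P : K[X]} (hP : P ≠ 0) {u : K} (hu : u ≠ 0) {m : ℕ}
    (h : ∀ l < m, (eulerDeriv^[l] P).eval u = 0) : m ≤ P.rootMultiplicity u := by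
  induction m generalizing P with
  | zero => exact Nat.zero_le _
  | succ m ih =>
    have hroot : P.IsRoot u := h 0 m.succ_pos
    have hdP : derivative P ≠ 0 := by
      rw [Ne, derivative_eq_zero]
      intro hdeg
      rw [eq_C_of_natDegree_eq_zero hdeg] at hP hroot
      exact C_ne_zero.mp hP (by simpa using hroot)
    have hEP : eulerDeriv P ≠ 0 := mul_ne_zero X_ne_zero hdP
    have ih' := ih hEP fun l hl => by simpa only [iterate_succ_apply] using h (l + 1) (by omega)
    rw [eulerDeriv, rootMultiplicity_mul hEP, rootMultiplicity_eq_zero (by simpa using hu),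
      derivative_rootMultiplicity_of_root hroot, zero_add] at ih'
    have := (rootMultiplicity_pos hP).mpr hroot
    omega

theorem le_rootMultiplicity_of_iteratedDeriv_eval_cexp_eq_zero {P : ℂ[X]} (hP : P ≠ 0)
    {μ : ℂ} (hμ : μ ≠ 0) {x : ℝ} {m : ℕ}
    (h : ∀ l < m, iteratedDeriv l (fun t : ℝ => P.eval (cexp (μ * t))) x = 0) :
    m ≤ P.rootMultiplicity (cexp (μ * x)) := by
  refine le_rootMultiplicity_of_eval_iterate_eulerDeriv_eq_zero hP (exp_ne_zero _) fun l hl => ?_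
  have := h l hl
  rw [iteratedDeriv_eval_cexp] at this
  exact (mul_eq_zero.mp this).resolve_left (pow_ne_zero _ hμ)

theorem Polynomial.sum_rootMultiplicity_le_natDegree {R ι : Type*} [CommRing R] [IsDomain R]
    [Fintype ι] (P : R[X]) {u : ι → R} (hu : Injective u) :
    ∑ i, P.rootMultiplicity (u i) ≤ P.natDegree := by
  classical
  calc ∑ i, P.rootMultiplicity (u i)
      = ∑ x ∈ Finset.univ.image u, P.roots.count x := by
        rw [Finset.sum_image fun i _ j _ hij => hu hij]
        simp only [count_roots]
    _ ≤ ∑ x ∈ Finset.univ.image u ∪ P.roots.toFinset, P.roots.count x :=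
        Finset.sum_le_sum_of_subset Finset.subset_union_left
    _ = Multiset.card P.roots :=
        Multiset.sum_count_eq_card fun x hx => by simp [hx]
    _ ≤ P.natDegree := card_roots' P

theorem injOn_cexp_two_pi_I_mul : InjOn (fun t : ℝ => cexp (2 * π * I * t)) (Ioo 0 1) := by
  intro s hs t ht hst
  have hcirc : Circle.exp (2 * π * s) = Circle.exp (2 * π * t) := by
    ext
    simp only [Circle.coe_exp]
    push_cast
    convert hst using 2 <;> ring
  have := Circle.exp_injOn_Ico (a := 0) (b := 2 * π) (by simp)
    ⟨by nlinarith [Real.pi_pos, hs.1], by nlinarith [Real.pi_pos, hs.2]⟩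
    ⟨by nlinarith [Real.pi_pos, ht.1], by nlinarith [Real.pi_pos, ht.2]⟩ hcirc
  nlinarith [Real.pi_pos]

noncomputable def trigPoly (a b c d : ℝ) : ℂ[X] :=
  C (c + d * I) + C (a + b * I) * X + C (a - b * I) * X ^ 2 + C (c - d * I) * X ^ 3

theorem eval_trigPoly_cexp (a b c d t : ℝ) :
    (trigPoly a b c d).eval (cexp (2 * π * I * t)) = 2 * cexp (3 * π * I * t) *
      ↑(a * Real.cos (π * t) + b * Real.sin (π * t) + c * Real.cos (3 * π * t)
        + d * Real.sin (3 * π * t)) := by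
  set z := cexp (π * t * I) with hz
  have hpow : ∀ (k : ℕ) (w : ℂ), w = k * (π * t * I) → cexp w = z ^ k := fun k w hw => by
    rw [hw, Complex.exp_nat_mul]
  have hinv : ∀ (k : ℕ) (w : ℂ), w = -(k * (π * t * I)) → cexp w = (z ^ k)⁻¹ :=
    fun k w hw => by rw [hw, Complex.exp_neg, Complex.exp_nat_mul]
  push_cast
  rw [Complex.cos, Complex.sin, Complex.cos, Complex.sin,
    hpow 2 (2 * π * I * t) (by push_cast; ring), hpow 3 (3 * π * I * t) (by push_cast; ring),
    hpow 3 (3 * π * t * I) (by push_cast; ring), hinv 3 (-(3 * π * t) * I) (by push_cast; ring),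
    hpow 1 (π * t * I) (by push_cast; ring), hinv 1 (-(π * t) * I) (by push_cast; ring)]
  have hz0 : z ≠ 0 := Complex.exp_ne_zero _
  simp only [trigPoly, eval_add, eval_mul, eval_C, eval_pow, eval_X]
  field_simp
  ring

theorem natDegree_trigPoly_le (a b c d : ℝ) : (trigPoly a b c d).natDegree ≤ 3 := by
  unfold trigPoly
  compute_degree

theorem trigPoly_ne_zero {a b c d : ℝ} (h : ¬(a = 0 ∧ b = 0 ∧ c = 0 ∧ d = 0)) :
    trigPoly a b c d ≠ 0 := by
  intro hQ
  have h1 := congrArg (coeff · 1) hQ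
  have h3 := congrArg (coeff · 3) hQ
  simp only [trigPoly, coeff_add, coeff_C_mul, coeff_X_pow, coeff_C, coeff_X] at h1 h3
  norm_num [Complex.ext_iff] at h1 h3
  exact h ⟨h1.1, h1.2, h3.1, h3.2⟩

theorem exists_dotv_gamma12_eq {h : Fin 4 → ℝ} (hh : h ≠ 0) :
    ∃ a b c d : ℝ, ¬(a = 0 ∧ b = 0 ∧ c = 0 ∧ d = 0) ∧ (fun t => dotv h (gamma12 t)) =
      fun t => a * Real.cos (π * t) + b * Real.sin (π * t) + c * Real.cos (3 * π * t)
        + d * Real.sin (3 * π * t) := by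
  refine ⟨3 / 4 * h 0 + √3 / 4 * h 2, √3 / 4 * h 1 + 3 / 4 * h 3,
    1 / 4 * h 0 - √3 / 4 * h 2, √3 / 4 * h 1 - 1 / 4 * h 3, ?_, ?_⟩
  · rintro ⟨ha, hb, hc, hd⟩
    have hs : 0 < √3 := by positivity
    have h0 : h 0 = 0 := by linarith
    have h3 : h 3 = 0 := by linarith
    have h1 : h 1 = 0 := by nlinarith
    have h2 : h 2 = 0 := by nlinarith
    exact hh (funext fun i => by fin_cases i <;> assumption)
  · funext t
    simp only [dotv, gamma12, Fin.sum_univ_four, Matrix.cons_val_zero, Matrix.cons_val_one,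
      Matrix.cons_val_two, Matrix.cons_val_three, Matrix.head_cons, Matrix.tail_cons]
    ring

/-- The curve `γ₁² ∈ LS³(1, −1)` is convex: it meets every hyperplane
through the origin of `ℝ⁴` with total multiplicity at most 3 on `(0,1)`. -/
theorem stmt_16 : ∀ h : Fin 4 → ℝ, h ≠ 0 → MultAtMost gamma12 0 1 h 3 := by
  intro h hh j t m ht hinj _ hder
  obtain ⟨a, b, c, d, habcd, hf⟩ := exists_dotv_gamma12_eq hh
  rw [hf] at hder
  set Q := trigPoly a b c d
  have hmult (i : Fin j) : m i ≤ Q.rootMultiplicity (cexp (2 * π * I * t i)) := by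
    refine le_rootMultiplicity_of_iteratedDeriv_eval_cexp_eq_zero (trigPoly_ne_zero habcd)
      (by simp [pi_ne_zero, I_ne_zero]) fun l hl => ?_
    simp_rw [eval_trigPoly_cexp]
    exact iteratedDeriv_mul_ofReal_eq_zero (by fun_prop) (by fun_prop)
      fun k hk => hder i k (by omega)
  calc ∑ i, m i ≤ ∑ i, Q.rootMultiplicity (cexp (2 * π * I * t i)) :=
        Finset.sum_le_sum fun i _ => hmult i
    _ ≤ Q.natDegree := sum_rootMultiplicity_le_natDegree Q
        fun i k hik => hinj (injOn_cexp_two_pi_I_mul (ht i) (ht k) hik)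
    _ ≤ 3 := natDegree_trigPoly_le a b c d
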